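/- Let Γ be a group and R a Γ-graded ring. Suppose Σ ⊆ 𝔐(R) is nonempty and satisfies A ⊕ B ∈ Σ for all A, B ∈ Σ, and suppose 𝒜 is a gr-matrix ideal of R with 𝒜 ∩ Σ = ∅. Then the collection W of gr-matrix ideals ℬ of R with 𝒜 ⊆ ℬ and ℬ ∩ Σ = ∅, partially ordered by inclusion, has maximal elements, and every maximal element of W is a gr-prime matrix ideal of R. -/
import Mathlib


open Matrix

universe u v w

section GradedDefs

variable {Γ : Type u} [Group Γ] {R : Type v} [Ring R]

/-- `A` is a homogeneous matrix of distribution `(α, β)`: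
its `(i,j)` entry lies in `𝒜 (α i * (β j)⁻¹)`. -/
def IsHomog (𝒜 : Γ → AddSubgroup R) {m n : ℕ}
    (A : Matrix (Fin m) (Fin n) R) (α : Fin m → Γ) (β : Fin n → Γ) : Prop :=
  ∀ i j, A i j ∈ 𝒜 (α i * (β j)⁻¹)

/-- `A` is a homogeneous matrix for some distribution. -/
def IsHomogSq (𝒜 : Γ → AddSubgroup R) {m n : ℕ}
    (A : Matrix (Fin m) (Fin n) R) : Prop :=
  ∃ (α : Fin m → Γ) (β : Fin n → Γ), IsHomog 𝒜 A α β

end GradedDefs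

/-- Square matrices over `R` of arbitrary finite size. -/
abbrev SqMat (R : Type v) : Type v := Σ n : ℕ, Matrix (Fin n) (Fin n) R

section GradedDefs

variable {Γ : Type u} [Group Γ] {R : Type v} [Ring R]

/-- Diagonal sum `A ⊕ B` of two (rectangular) matrices. -/
def diagSum {m n m' n' : ℕ} (A : Matrix (Fin m) (Fin n) R)
    (B : Matrix (Fin m') (Fin n') R) : Matrix (Fin (m + m')) (Fin (n + n')) R :=
  Matrix.reindex finSumFinEquiv finSumFinEquiv (Matrix.fromBlocks A 0 0 B)

/-- Block lower triangular matrix `[[A, 0], [C, B]]`. -/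
def lowerBlockSum {n m : ℕ} (A : Matrix (Fin n) (Fin n) R) (B : Matrix (Fin m) (Fin m) R)
    (C : Matrix (Fin m) (Fin n) R) : Matrix (Fin (n + m)) (Fin (n + m)) R :=
  Matrix.reindex finSumFinEquiv finSumFinEquiv (Matrix.fromBlocks A 0 C B)

/-- Block upper triangular matrix `[[A, C], [0, B]]` with rectangular blocks. -/
def upperBlockSum {m n m' n' : ℕ} (A : Matrix (Fin m) (Fin n) R)
    (B : Matrix (Fin m') (Fin n') R) (C : Matrix (Fin m) (Fin n') R) :
    Matrix (Fin (m + m')) (Fin (n + n')) R :=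
  Matrix.reindex finSumFinEquiv finSumFinEquiv (Matrix.fromBlocks A C 0 B)

/-- `C` is the determinantal sum of `A` and `B` with respect to some column or row:
`A` and `B` agree away from that column (row) and the distinguished column (row) of `C`
is the sum of the corresponding columns (rows) of `A` and `B`. -/
def IsDetSum {n : ℕ} (A B C : Matrix (Fin n) (Fin n) R) : Prop :=
  (∃ c : Fin n, (∀ i j, j ≠ c → A i j = B i j) ∧
      ∀ i j, C i j = if j = c then A i j + B i j else A i j) ∨
  (∃ r : Fin n, (∀ i j, i ≠ r → A i j = B i j) ∧
      ∀ i j, C i j = if i = r then A i j + B i j else A i j)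

/-- `C` is the determinantal sum of the homogeneous matrices `A` and `B`
(which have a common distribution). -/
def GrDetSum (𝒜 : Γ → AddSubgroup R) {n : ℕ} (A B C : Matrix (Fin n) (Fin n) R) : Prop :=
  (∃ α β : Fin n → Γ, IsHomog 𝒜 A α β ∧ IsHomog 𝒜 B α β) ∧ IsDetSum A B C

/-- A square homogeneous matrix `A` is gr-full if whenever `A = P * Q` with `P`
homogeneous of distribution `(α, lam)` and `Q` homogeneous of distribution `(lam, β)`
where `lam` has length `r`, then `r ≥ n`. -/
def IsGrFull (𝒜 : Γ → AddSubgroup R) {n : ℕ} (A : Matrix (Fin n) (Fin n) R) : Prop :=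
  ∀ (r : ℕ) (P : Matrix (Fin n) (Fin r) R) (Q : Matrix (Fin r) (Fin n) R)
    (α : Fin n → Γ) (lam : Fin r → Γ) (β : Fin n → Γ),
    IsHomog 𝒜 P α lam → IsHomog 𝒜 Q lam β → A = P * Q → n ≤ r

/-- gr-prime matrix ideal: a set of square homogeneous matrices satisfying (PM1)–(PM6). -/
structure IsGrPrimeMatrixIdeal (𝒜 : Γ → AddSubgroup R) (P : Set (SqMat R)) : Prop where
  subset_homog : ∀ p ∈ P, IsHomogSq 𝒜 p.2
  pm1 : ∀ {n : ℕ} (A : Matrix (Fin n) (Fin n) R),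
    IsHomogSq 𝒜 A → ¬ IsGrFull 𝒜 A → (⟨n, A⟩ : SqMat R) ∈ P
  pm2 : ∀ {n : ℕ} (A B C : Matrix (Fin n) (Fin n) R),
    (⟨n, A⟩ : SqMat R) ∈ P → (⟨n, B⟩ : SqMat R) ∈ P → GrDetSum 𝒜 A B C →
    (⟨n, C⟩ : SqMat R) ∈ P
  pm3 : ∀ {m n : ℕ} (A : Matrix (Fin m) (Fin m) R) (B : Matrix (Fin n) (Fin n) R),
    (⟨m, A⟩ : SqMat R) ∈ P → IsHomogSq 𝒜 B → (⟨m + n, diagSum A B⟩ : SqMat R) ∈ P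
  pm4 : ∀ {m n : ℕ} (A : Matrix (Fin m) (Fin m) R) (B : Matrix (Fin n) (Fin n) R),
    IsHomogSq 𝒜 A → IsHomogSq 𝒜 B → (⟨m + n, diagSum A B⟩ : SqMat R) ∈ P →
    (⟨m, A⟩ : SqMat R) ∈ P ∨ (⟨n, B⟩ : SqMat R) ∈ P
  pm5 : (⟨1, (1 : Matrix (Fin 1) (Fin 1) R)⟩ : SqMat R) ∉ P
  pm6 : ∀ {n : ℕ} (A : Matrix (Fin n) (Fin n) R) (e f : Equiv.Perm (Fin n)),
    (⟨n, A⟩ : SqMat R) ∈ P → (⟨n, A.submatrix ⇑e ⇑f⟩ : SqMat R) ∈ P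

/-- gr-matrix ideal: a set of square homogeneous matrices satisfying (I1)–(I5). -/
structure IsGrMatrixIdeal (𝒜 : Γ → AddSubgroup R) (I : Set (SqMat R)) : Prop where
  subset_homog : ∀ p ∈ I, IsHomogSq 𝒜 p.2
  i1 : ∀ {n : ℕ} (A : Matrix (Fin n) (Fin n) R),
    IsHomogSq 𝒜 A → ¬ IsGrFull 𝒜 A → (⟨n, A⟩ : SqMat R) ∈ I
  i2 : ∀ {n : ℕ} (A B C : Matrix (Fin n) (Fin n) R),
    (⟨n, A⟩ : SqMat R) ∈ I → (⟨n, B⟩ : SqMat R) ∈ I → GrDetSum 𝒜 A B C →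
    (⟨n, C⟩ : SqMat R) ∈ I
  i3 : ∀ {m n : ℕ} (A : Matrix (Fin m) (Fin m) R) (B : Matrix (Fin n) (Fin n) R),
    (⟨m, A⟩ : SqMat R) ∈ I → IsHomogSq 𝒜 B → (⟨m + n, diagSum A B⟩ : SqMat R) ∈ I
  i4 : ∀ {n : ℕ} (A : Matrix (Fin n) (Fin n) R) (e f : Equiv.Perm (Fin n)),
    (⟨n, A⟩ : SqMat R) ∈ I → (⟨n, A.submatrix ⇑e ⇑f⟩ : SqMat R) ∈ I
  i5 : ∀ {n : ℕ} (A : Matrix (Fin n) (Fin n) R),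
    (⟨n + 1, diagSum A (1 : Matrix (Fin 1) (Fin 1) R)⟩ : SqMat R) ∈ I →
    (⟨n, A⟩ : SqMat R) ∈ I

/-- The diagonal sum of `r` copies of `A`. -/
def diagIter {n : ℕ} (A : Matrix (Fin n) (Fin n) R) :
    (r : ℕ) → Matrix (Fin (n * r)) (Fin (n * r)) R
  | 0 => 0
  | r + 1 => diagSum (diagIter A r) A

/-- Iterated determinantal sums (with arbitrary bracketing) of elements of `W`. -/
inductive IsDetSumOf (𝒜 : Γ → AddSubgroup R) (W : Set (SqMat R)) : SqMat R → Prop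
  | base (p : SqMat R) (hp : p ∈ W) : IsDetSumOf 𝒜 W p
  | step {n : ℕ} (A B C : Matrix (Fin n) (Fin n) R)
      (hA : IsDetSumOf 𝒜 W ⟨n, A⟩) (hB : IsDetSumOf 𝒜 W ⟨n, B⟩)
      (h : GrDetSum 𝒜 A B C) : IsDetSumOf 𝒜 W ⟨n, C⟩

/-- The homogeneous rational closure of degree `γ`: entries `(j,i)` of inverses of matrices
`A^f` with `A ∈ Sig` homogeneous of distribution `(α, β)` and `β j * (α i)⁻¹ = γ`. -/
def RatCl (𝒜 : Γ → AddSubgroup R) {S : Type w} [Ring S] (Sig : Set (SqMat R)) (f : R →+* S)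
    (γ : Γ) : Set S :=
  {x | ∃ (n : ℕ) (A : Matrix (Fin n) (Fin n) R) (α β : Fin n → Γ) (i j : Fin n)
        (B : Matrix (Fin n) (Fin n) S),
      (⟨n, A⟩ : SqMat R) ∈ Sig ∧ IsHomog 𝒜 A α β ∧ β j * (α i)⁻¹ = γ ∧
      (A.map ⇑f) * B = 1 ∧ B * (A.map ⇑f) = 1 ∧ B j i = x}

/-- gr-lower semimultiplicative set of square homogeneous matrices. -/
def IsGrLowerSemimult (𝒜 : Γ → AddSubgroup R) (Sig : Set (SqMat R)) : Prop :=
  ((⟨1, (1 : Matrix (Fin 1) (Fin 1) R)⟩ : SqMat R) ∈ Sig) ∧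
  ∀ {n m : ℕ} (A : Matrix (Fin n) (Fin n) R) (B : Matrix (Fin m) (Fin m) R)
    (α β : Fin n → Γ) (α' β' : Fin m → Γ) (C : Matrix (Fin m) (Fin n) R),
    (⟨n, A⟩ : SqMat R) ∈ Sig → (⟨m, B⟩ : SqMat R) ∈ Sig →
    IsHomog 𝒜 A α β → IsHomog 𝒜 B α' β' → IsHomog 𝒜 C α' β →
    (⟨n + m, lowerBlockSum A B C⟩ : SqMat R) ∈ Sig

end GradedDefs

/-- A homomorphism of `Γ`-graded rings from `(R, 𝒜)` to a `Γ`-graded division ring. -/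
structure GrDivRingHom (Γ : Type u) [Group Γ] [DecidableEq Γ] (R : Type v) [Ring R]
    (𝒜 : Γ → AddSubgroup R) where
  K : Type (max u v)
  [ringK : Ring K]
  [nontrivialK : Nontrivial K]
  grading : Γ → AddSubgroup K
  internal : DirectSum.IsInternal grading
  one_mem : (1 : K) ∈ grading 1
  mul_mem : ∀ {γ δ : Γ} {x y : K}, x ∈ grading γ → y ∈ grading δ → x * y ∈ grading (γ * δ)
  isUnit_of_ne : ∀ {γ : Γ} {x : K}, x ∈ grading γ → x ≠ 0 → IsUnit x
  φ : R →+* K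
  map_mem : ∀ {γ : Γ} {r : R}, r ∈ 𝒜 γ → φ r ∈ grading γ

attribute [instance] GrDivRingHom.ringK GrDivRingHom.nontrivialK
section Dev

open Matrix

variable {Γ : Type u} [Group Γ] {R : Type v} [Ring R]

@[simp] lemma diagSum_apply_fin {m n m' n' : ℕ} (A : Matrix (Fin m) (Fin n) R)
    (B : Matrix (Fin m') (Fin n') R) (x : Fin m ⊕ Fin m') (y : Fin n ⊕ Fin n') :
    diagSum A B (finSumFinEquiv x) (finSumFinEquiv y) = Matrix.fromBlocks A 0 0 B x y := by
  simp [diagSum]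


@[simp] lemma diagSum_cc {m n m' n' : ℕ} (A : Matrix (Fin m) (Fin n) R)
    (B : Matrix (Fin m') (Fin n') R) (i : Fin m) (j : Fin n) :
    diagSum A B (Fin.castAdd m' i) (Fin.castAdd n' j) = A i j := by
  simp [diagSum, finSumFinEquiv_symm_apply_castAdd]

@[simp] lemma diagSum_nn {m n m' n' : ℕ} (A : Matrix (Fin m) (Fin n) R)
    (B : Matrix (Fin m') (Fin n') R) (i : Fin m') (j : Fin n') :
    diagSum A B (Fin.natAdd m i) (Fin.natAdd n j) = B i j := by
  simp [diagSum, finSumFinEquiv_symm_apply_natAdd]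

@[simp] lemma diagSum_cn {m n m' n' : ℕ} (A : Matrix (Fin m) (Fin n) R)
    (B : Matrix (Fin m') (Fin n') R) (i : Fin m) (j : Fin n') :
    diagSum A B (Fin.castAdd m' i) (Fin.natAdd n j) = 0 := by
  simp [diagSum, finSumFinEquiv_symm_apply_castAdd, finSumFinEquiv_symm_apply_natAdd]

@[simp] lemma diagSum_nc {m n m' n' : ℕ} (A : Matrix (Fin m) (Fin n) R)
    (B : Matrix (Fin m') (Fin n') R) (i : Fin m') (j : Fin n) :
    diagSum A B (Fin.natAdd m i) (Fin.castAdd n' j) = 0 := by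
  simp [diagSum, finSumFinEquiv_symm_apply_castAdd, finSumFinEquiv_symm_apply_natAdd]

/-- The equiv on `Fin` sums induced by two equivs. -/
def esum {a b c d : ℕ} (e : Fin a ≃ Fin b) (g : Fin c ≃ Fin d) : Fin (a + c) ≃ Fin (b + d) :=
  finSumFinEquiv.symm.trans ((e.sumCongr g).trans finSumFinEquiv)

@[simp] lemma esum_apply {a b c d : ℕ} (e : Fin a ≃ Fin b) (g : Fin c ≃ Fin d)
    (x : Fin a ⊕ Fin c) :
    esum e g (finSumFinEquiv x) = finSumFinEquiv (x.map e g) := by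
  simp [esum, Equiv.sumCongr_apply]

lemma diagSum_submatrix {a b c d a' b' c' d' : ℕ}
    (A : Matrix (Fin a) (Fin b) R) (B : Matrix (Fin c) (Fin d) R)
    (e : Fin a' ≃ Fin a) (f : Fin b' ≃ Fin b) (g : Fin c' ≃ Fin c) (h : Fin d' ≃ Fin d) :
    diagSum (A.submatrix e f) (B.submatrix g h)
      = (diagSum A B).submatrix (esum e g) (esum f h) := by
  ext i j
  obtain ⟨x, rfl⟩ := finSumFinEquiv.surjective i
  obtain ⟨y, rfl⟩ := finSumFinEquiv.surjective j
  rw [Matrix.submatrix_apply, esum_apply, esum_apply, diagSum_apply_fin, diagSum_apply_fin]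
  cases x <;> cases y <;> simp [Matrix.fromBlocks]

/-- The associativity equiv. -/
def eassoc {a b c : ℕ} : Fin (a + (b + c)) ≃ Fin ((a + b) + c) :=
  finSumFinEquiv.symm.trans (((Equiv.refl (Fin a)).sumCongr finSumFinEquiv.symm).trans
    ((Equiv.sumAssoc (Fin a) (Fin b) (Fin c)).symm.trans
      ((finSumFinEquiv.sumCongr (Equiv.refl (Fin c))).trans finSumFinEquiv)))

lemma diagSum_assoc {a b c a' b' c' : ℕ} (A : Matrix (Fin a) (Fin a') R)
    (B : Matrix (Fin b) (Fin b') R) (C : Matrix (Fin c) (Fin c') R) :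
    diagSum A (diagSum B C) = (diagSum (diagSum A B) C).submatrix eassoc eassoc := by
  ext i j
  obtain ⟨x, rfl⟩ := finSumFinEquiv.surjective i
  obtain ⟨y, rfl⟩ := finSumFinEquiv.surjective j
  rw [Matrix.submatrix_apply, diagSum_apply_fin]
  cases x with
  | inl xa =>
      cases y with
      | inl ya => simp [eassoc, Matrix.fromBlocks]
      | inr yr =>
          obtain ⟨y2, rfl⟩ := finSumFinEquiv.surjective yr
          cases y2 <;> simp [eassoc, Matrix.fromBlocks]
  | inr xr =>
      obtain ⟨x2, rfl⟩ := finSumFinEquiv.surjective xr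
      cases x2 with
      | inl x2 =>
          cases y with
          | inl ya => simp [eassoc, Matrix.fromBlocks]
          | inr yr =>
              obtain ⟨y2, rfl⟩ := finSumFinEquiv.surjective yr
              cases y2 <;> simp [eassoc, Matrix.fromBlocks]
      | inr x2 =>
          cases y with
          | inl ya => simp [eassoc, Matrix.fromBlocks]
          | inr yr =>
              obtain ⟨y2, rfl⟩ := finSumFinEquiv.surjective yr
              cases y2 <;> simp [eassoc, Matrix.fromBlocks]

/-- The commutativity equiv. -/
def ecomm {a b : ℕ} : Fin (b + a) ≃ Fin (a + b) :=
  finSumFinEquiv.symm.trans ((Equiv.sumComm (Fin b) (Fin a)).trans finSumFinEquiv)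

lemma diagSum_comm {a b a' b' : ℕ} (A : Matrix (Fin a) (Fin a') R)
    (B : Matrix (Fin b) (Fin b') R) :
    diagSum B A = (diagSum A B).submatrix ecomm ecomm := by
  ext i j
  obtain ⟨x, rfl⟩ := finSumFinEquiv.surjective i
  obtain ⟨y, rfl⟩ := finSumFinEquiv.surjective j
  rw [Matrix.submatrix_apply, diagSum_apply_fin]
  cases x <;> cases y <;> simp [ecomm, Matrix.fromBlocks]

lemma diagSum_one {k l : ℕ} : diagSum (1 : Matrix (Fin k) (Fin k) R) (1 : Matrix (Fin l) (Fin l) R)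
    = (1 : Matrix (Fin (k + l)) (Fin (k + l)) R) := by
  rw [diagSum, Matrix.fromBlocks_one]
  exact Matrix.submatrix_one_equiv finSumFinEquiv.symm

lemma diagSum_nil {m n : ℕ} (A : Matrix (Fin m) (Fin n) R)
    (B : Matrix (Fin 0) (Fin 0) R) : diagSum A B = A := by
  ext i j
  obtain ⟨x, rfl⟩ := finSumFinEquiv.surjective i
  obtain ⟨y, rfl⟩ := finSumFinEquiv.surjective j
  cases x with
  | inl xa =>
      cases y with
      | inl ya =>
          rw [finSumFinEquiv_apply_left, finSumFinEquiv_apply_left, diagSum_cc]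
          congr 1 <;> exact Fin.ext rfl
      | inr yb => exact absurd yb.2 (by omega)
  | inr xb => exact absurd xb.2 (by omega)

lemma diagSum_mul {a b c a' b' c' : ℕ} (A : Matrix (Fin a) (Fin b) R)
    (B : Matrix (Fin b) (Fin c) R) (A' : Matrix (Fin a') (Fin b') R)
    (B' : Matrix (Fin b') (Fin c') R) :
    diagSum A A' * diagSum B B' = diagSum (A * B) (A' * B') := by
  rw [diagSum, diagSum, diagSum, Matrix.reindex_apply, Matrix.reindex_apply,
    Matrix.reindex_apply, Matrix.submatrix_mul_equiv, Matrix.fromBlocks_multiply]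
  simp

end Dev
section Dev2

open Matrix

variable {Γ : Type u} [Group Γ] {R : Type v} [Ring R] {𝒜 : Γ → AddSubgroup R}

lemma isHomog_one (hone : (1 : R) ∈ 𝒜 1) (k : ℕ) :
    IsHomog 𝒜 (1 : Matrix (Fin k) (Fin k) R) (fun _ => (1 : Γ)) (fun _ => (1 : Γ)) := by
  intro i j
  rcases eq_or_ne i j with rfl | h
  · simpa using hone
  · rw [Matrix.one_apply_ne h]; exact zero_mem _

lemma isHomog_diagSum {m n m' n' : ℕ} {A : Matrix (Fin m) (Fin n) R}
    {B : Matrix (Fin m') (Fin n') R} {α β α' β'}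
    (hA : IsHomog 𝒜 A α β) (hB : IsHomog 𝒜 B α' β') :
    IsHomog 𝒜 (diagSum A B) (Sum.elim α α' ∘ ⇑finSumFinEquiv.symm)
      (Sum.elim β β' ∘ ⇑finSumFinEquiv.symm) := by
  intro i j
  obtain ⟨x, rfl⟩ := finSumFinEquiv.surjective i
  obtain ⟨y, rfl⟩ := finSumFinEquiv.surjective j
  rw [diagSum_apply_fin]
  cases x <;> cases y <;>
    simp only [Function.comp_apply, Equiv.symm_apply_apply, Sum.elim_inl, Sum.elim_inr,
      Matrix.fromBlocks_apply₁₁, Matrix.fromBlocks_apply₁₂, Matrix.fromBlocks_apply₂₁,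
      Matrix.fromBlocks_apply₂₂, Matrix.zero_apply] <;>
    first
      | exact hA _ _
      | exact hB _ _
      | exact zero_mem _

lemma isHomogSq_diagSum {m n : ℕ} {A : Matrix (Fin m) (Fin m) R} {B : Matrix (Fin n) (Fin n) R}
    (hA : IsHomogSq 𝒜 A) (hB : IsHomogSq 𝒜 B) : IsHomogSq 𝒜 (diagSum A B) := by
  obtain ⟨α, β, hA⟩ := hA
  obtain ⟨α', β', hB⟩ := hB
  exact ⟨_, _, isHomog_diagSum hA hB⟩

lemma isHomog_submatrix {m n m' n' : ℕ} {A : Matrix (Fin m) (Fin n) R} {α β}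
    (hA : IsHomog 𝒜 A α β) (e : Fin m' → Fin m) (f : Fin n' → Fin n) :
    IsHomog 𝒜 (A.submatrix e f) (α ∘ e) (β ∘ f) := fun i j => hA (e i) (f j)

lemma isHomogSq_submatrix {m n m' n' : ℕ} {A : Matrix (Fin m) (Fin n) R}
    (hA : IsHomogSq 𝒜 A) (e : Fin m' → Fin m) (f : Fin n' → Fin n) :
    IsHomogSq 𝒜 (A.submatrix e f) := by
  obtain ⟨α, β, hA⟩ := hA
  exact ⟨_, _, isHomog_submatrix hA e f⟩

lemma isHomogSq_detSum {n : ℕ} {A B C : Matrix (Fin n) (Fin n) R}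
    (h : GrDetSum 𝒜 A B C) : IsHomogSq 𝒜 C := by
  obtain ⟨⟨α, β, hA, hB⟩, hd⟩ := h
  refine ⟨α, β, fun i j => ?_⟩
  rcases hd with ⟨c, _, hC⟩ | ⟨r, _, hC⟩ <;> rw [hC] <;> split <;>
    first
      | exact add_mem (hA i j) (hB i j)
      | exact hA i j

/-- Diagonal sum with a homogeneous matrix preserves non-gr-fullness. -/
lemma not_grFull_diagSum (hone : (1 : R) ∈ 𝒜 1) {n k : ℕ} {A : Matrix (Fin n) (Fin n) R}
    {X : Matrix (Fin k) (Fin k) R} (hA : ¬ IsGrFull 𝒜 A) (hX : IsHomogSq 𝒜 X) :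
    ¬ IsGrFull 𝒜 (diagSum A X) := by
  obtain ⟨α', β', hX⟩ := hX
  rw [IsGrFull] at hA
  push_neg at hA
  obtain ⟨r, P, Q, α, lam, β, hP, hQ, hPQ, hr⟩ := hA
  intro hfull
  have h1 : IsHomog 𝒜 (diagSum P (1 : Matrix (Fin k) (Fin k) R))
      (Sum.elim α α' ∘ ⇑finSumFinEquiv.symm) (Sum.elim lam α' ∘ ⇑finSumFinEquiv.symm) := by
    refine isHomog_diagSum hP ?_
    intro i j
    rcases eq_or_ne i j with rfl | h
    · simpa using hone
    · rw [Matrix.one_apply_ne h]; exact zero_mem _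
  have h2 : IsHomog 𝒜 (diagSum Q X)
      (Sum.elim lam α' ∘ ⇑finSumFinEquiv.symm) (Sum.elim β β' ∘ ⇑finSumFinEquiv.symm) :=
    isHomog_diagSum hQ hX
  have := hfull (r + k) _ _ _ _ _ h1 h2 (by rw [diagSum_mul, Matrix.one_mul, hPQ])
  omega

/-- Reindexing by equivalences preserves non-gr-fullness. -/
lemma not_grFull_reindex {n n' : ℕ} {A : Matrix (Fin n) (Fin n) R}
    (hA : ¬ IsGrFull 𝒜 A) (e f : Fin n' ≃ Fin n) :
    ¬ IsGrFull 𝒜 (A.submatrix e f) := by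
  have hcard : n' = n := by simpa using Fintype.card_congr e
  rw [IsGrFull] at hA
  push_neg at hA
  obtain ⟨r, P, Q, α, lam, β, hP, hQ, hPQ, hr⟩ := hA
  intro hfull
  have := hfull r (P.submatrix ⇑e ⇑(Equiv.refl (Fin r))) (Q.submatrix ⇑(Equiv.refl (Fin r)) ⇑f)
    (α ∘ e) lam (β ∘ f)
    (isHomog_submatrix hP _ _) (isHomog_submatrix hQ _ _)
    (by rw [hPQ]; exact (Matrix.submatrix_mul_equiv P Q ⇑e (Equiv.refl (Fin r)) ⇑f).symm)
  omega

lemma isDetSum_diagSum_right {n k : ℕ} {A B C : Matrix (Fin n) (Fin n) R}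
    (T : Matrix (Fin k) (Fin k) R) (h : IsDetSum A B C) :
    IsDetSum (diagSum A T) (diagSum B T) (diagSum C T) := by
  rcases h with ⟨c, hagree, hC⟩ | ⟨r, hagree, hC⟩
  · refine Or.inl ⟨Fin.castAdd k c, ?_, ?_⟩
    · intro i j hj
      obtain ⟨x, rfl⟩ := finSumFinEquiv.surjective i
      obtain ⟨y, rfl⟩ := finSumFinEquiv.surjective j
      rw [diagSum_apply_fin, diagSum_apply_fin]
      cases x <;> cases y <;> simp only [Matrix.fromBlocks_apply₁₁, Matrix.fromBlocks_apply₁₂,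
        Matrix.fromBlocks_apply₂₁, Matrix.fromBlocks_apply₂₂]
      refine hagree _ _ fun hc => hj ?_
      rw [hc, ← finSumFinEquiv_apply_left]
    · intro i j
      obtain ⟨x, rfl⟩ := finSumFinEquiv.surjective i
      obtain ⟨y, rfl⟩ := finSumFinEquiv.surjective j
      rw [diagSum_apply_fin, diagSum_apply_fin, diagSum_apply_fin]
      have hyc : ∀ y : Fin n ⊕ Fin k, (finSumFinEquiv y = Fin.castAdd k c ↔ y = Sum.inl c) := by
        intro y
        rw [← finSumFinEquiv_apply_left, EmbeddingLike.apply_eq_iff_eq]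
      cases x <;> cases y <;>
        simp only [Matrix.fromBlocks_apply₁₁, Matrix.fromBlocks_apply₁₂,
          Matrix.fromBlocks_apply₂₁, Matrix.fromBlocks_apply₂₂, hyc]
      all_goals first | (rw [hC]; simp) | simp
  · refine Or.inr ⟨Fin.castAdd k r, ?_, ?_⟩
    · intro i j hi
      obtain ⟨x, rfl⟩ := finSumFinEquiv.surjective i
      obtain ⟨y, rfl⟩ := finSumFinEquiv.surjective j
      rw [diagSum_apply_fin, diagSum_apply_fin]
      cases x <;> cases y <;> simp only [Matrix.fromBlocks_apply₁₁, Matrix.fromBlocks_apply₁₂,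
        Matrix.fromBlocks_apply₂₁, Matrix.fromBlocks_apply₂₂]
      refine hagree _ _ fun hc => hi ?_
      rw [hc, ← finSumFinEquiv_apply_left]
    · intro i j
      obtain ⟨x, rfl⟩ := finSumFinEquiv.surjective i
      obtain ⟨y, rfl⟩ := finSumFinEquiv.surjective j
      rw [diagSum_apply_fin, diagSum_apply_fin, diagSum_apply_fin]
      have hyc : ∀ y : Fin n ⊕ Fin k, (finSumFinEquiv y = Fin.castAdd k r ↔ y = Sum.inl r) := by
        intro y
        rw [← finSumFinEquiv_apply_left, EmbeddingLike.apply_eq_iff_eq]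
      cases x <;> cases y <;>
        simp only [Matrix.fromBlocks_apply₁₁, Matrix.fromBlocks_apply₁₂,
          Matrix.fromBlocks_apply₂₁, Matrix.fromBlocks_apply₂₂, hyc]
      all_goals first | (rw [hC]; simp) | simp

lemma isDetSum_diagSum_left {n k : ℕ} {A B C : Matrix (Fin n) (Fin n) R}
    (T : Matrix (Fin k) (Fin k) R) (h : IsDetSum A B C) :
    IsDetSum (diagSum T A) (diagSum T B) (diagSum T C) := by
  rcases h with ⟨c, hagree, hC⟩ | ⟨r, hagree, hC⟩
  · refine Or.inl ⟨Fin.natAdd k c, ?_, ?_⟩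
    · intro i j hj
      obtain ⟨x, rfl⟩ := finSumFinEquiv.surjective i
      obtain ⟨y, rfl⟩ := finSumFinEquiv.surjective j
      rw [diagSum_apply_fin, diagSum_apply_fin]
      cases x <;> cases y <;> simp only [Matrix.fromBlocks_apply₁₁, Matrix.fromBlocks_apply₁₂,
        Matrix.fromBlocks_apply₂₁, Matrix.fromBlocks_apply₂₂]
      all_goals (refine hagree _ _ fun hc => hj ?_; rw [hc, ← finSumFinEquiv_apply_right])
    · intro i j
      obtain ⟨x, rfl⟩ := finSumFinEquiv.surjective i
      obtain ⟨y, rfl⟩ := finSumFinEquiv.surjective j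
      rw [diagSum_apply_fin, diagSum_apply_fin, diagSum_apply_fin]
      have hyc : ∀ y : Fin k ⊕ Fin n, (finSumFinEquiv y = Fin.natAdd k c ↔ y = Sum.inr c) := by
        intro y
        rw [← finSumFinEquiv_apply_right, EmbeddingLike.apply_eq_iff_eq]
      cases x <;> cases y <;>
        simp only [Matrix.fromBlocks_apply₁₁, Matrix.fromBlocks_apply₁₂,
          Matrix.fromBlocks_apply₂₁, Matrix.fromBlocks_apply₂₂, hyc]
      all_goals first | (rw [hC]; simp) | simp
  · refine Or.inr ⟨Fin.natAdd k r, ?_, ?_⟩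
    · intro i j hi
      obtain ⟨x, rfl⟩ := finSumFinEquiv.surjective i
      obtain ⟨y, rfl⟩ := finSumFinEquiv.surjective j
      rw [diagSum_apply_fin, diagSum_apply_fin]
      cases x <;> cases y <;> simp only [Matrix.fromBlocks_apply₁₁, Matrix.fromBlocks_apply₁₂,
        Matrix.fromBlocks_apply₂₁, Matrix.fromBlocks_apply₂₂]
      all_goals (refine hagree _ _ fun hc => hi ?_; rw [hc, ← finSumFinEquiv_apply_right])
    · intro i j
      obtain ⟨x, rfl⟩ := finSumFinEquiv.surjective i
      obtain ⟨y, rfl⟩ := finSumFinEquiv.surjective j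
      rw [diagSum_apply_fin, diagSum_apply_fin, diagSum_apply_fin]
      have hyc : ∀ y : Fin k ⊕ Fin n, (finSumFinEquiv y = Fin.natAdd k r ↔ y = Sum.inr r) := by
        intro y
        rw [← finSumFinEquiv_apply_right, EmbeddingLike.apply_eq_iff_eq]
      cases x <;> cases y <;>
        simp only [Matrix.fromBlocks_apply₁₁, Matrix.fromBlocks_apply₁₂,
          Matrix.fromBlocks_apply₂₁, Matrix.fromBlocks_apply₂₂, hyc]
      all_goals first | (rw [hC]; simp) | simp

lemma grDetSum_diagSum_right (hone : (1 : R) ∈ 𝒜 1) {n k : ℕ}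
    {A B C : Matrix (Fin n) (Fin n) R} {T : Matrix (Fin k) (Fin k) R}
    (hT : IsHomogSq 𝒜 T) (h : GrDetSum 𝒜 A B C) :
    GrDetSum 𝒜 (diagSum A T) (diagSum B T) (diagSum C T) := by
  obtain ⟨⟨α, β, hA, hB⟩, hd⟩ := h
  obtain ⟨α', β', hT⟩ := hT
  exact ⟨⟨_, _, isHomog_diagSum hA hT, isHomog_diagSum hB hT⟩, isDetSum_diagSum_right T hd⟩

lemma grDetSum_diagSum_left (hone : (1 : R) ∈ 𝒜 1) {n k : ℕ}
    {A B C : Matrix (Fin n) (Fin n) R} {T : Matrix (Fin k) (Fin k) R}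
    (hT : IsHomogSq 𝒜 T) (h : GrDetSum 𝒜 A B C) :
    GrDetSum 𝒜 (diagSum T A) (diagSum T B) (diagSum T C) := by
  obtain ⟨⟨α, β, hA, hB⟩, hd⟩ := h
  obtain ⟨α', β', hT⟩ := hT
  exact ⟨⟨_, _, isHomog_diagSum hT hA, isHomog_diagSum hT hB⟩, isDetSum_diagSum_left T hd⟩

end Dev2
section Dev3

open Matrix

variable {Γ : Type u} [Group Γ] {R : Type v} [Ring R]

lemma diagSum_submatrix_right {a b c d c' d' : ℕ}
    (A : Matrix (Fin a) (Fin b) R) (B : Matrix (Fin c) (Fin d) R)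
    (g : Fin c' ≃ Fin c) (h : Fin d' ≃ Fin d) :
    diagSum A (B.submatrix g h)
      = (diagSum A B).submatrix (esum (Equiv.refl _) g) (esum (Equiv.refl _) h) := by
  ext i j
  obtain ⟨x, rfl⟩ := finSumFinEquiv.surjective i
  obtain ⟨y, rfl⟩ := finSumFinEquiv.surjective j
  rw [Matrix.submatrix_apply, esum_apply, esum_apply, diagSum_apply_fin, diagSum_apply_fin]
  cases x <;> cases y <;> simp [Matrix.fromBlocks]

lemma diagSum_submatrix_left {a b c d a' b' : ℕ}
    (A : Matrix (Fin a) (Fin b) R) (B : Matrix (Fin c) (Fin d) R)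
    (e : Fin a' ≃ Fin a) (f : Fin b' ≃ Fin b) :
    diagSum (A.submatrix e f) B
      = (diagSum A B).submatrix (esum e (Equiv.refl _)) (esum f (Equiv.refl _)) := by
  ext i j
  obtain ⟨x, rfl⟩ := finSumFinEquiv.surjective i
  obtain ⟨y, rfl⟩ := finSumFinEquiv.surjective j
  rw [Matrix.submatrix_apply, esum_apply, esum_apply, diagSum_apply_fin, diagSum_apply_fin]
  cases x <;> cases y <;> simp [Matrix.fromBlocks]

lemma submatrix_equiv_symm {a b a' b' : ℕ} (M : Matrix (Fin a) (Fin b) R)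
    (e : Fin a' ≃ Fin a) (f : Fin b' ≃ Fin b) :
    (M.submatrix ⇑e ⇑f).submatrix ⇑e.symm ⇑f.symm = M := by
  ext i j; simp

section PermClosed

variable {S : Set (SqMat R)}

/-- A set of square matrices is perm-closed. -/
def PermClosed (S : Set (SqMat R)) : Prop :=
  ∀ {n : ℕ} (A : Matrix (Fin n) (Fin n) R) (e f : Equiv.Perm (Fin n)),
    (⟨n, A⟩ : SqMat R) ∈ S → (⟨n, A.submatrix ⇑e ⇑f⟩ : SqMat R) ∈ S

lemma PermClosed.mem_reindex (hS : PermClosed S) {a b : ℕ} (M : Matrix (Fin a) (Fin a) R)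
    (e f : Fin b ≃ Fin a) (hM : (⟨a, M⟩ : SqMat R) ∈ S) :
    (⟨b, M.submatrix ⇑e ⇑f⟩ : SqMat R) ∈ S := by
  have h : b = a := by simpa using Fintype.card_congr e
  subst h
  exact hS M e f hM

lemma PermClosed.mem_swap (hS : PermClosed S) {a b : ℕ} (M : Matrix (Fin a) (Fin a) R)
    (N : Matrix (Fin b) (Fin b) R) (h : (⟨a + b, diagSum M N⟩ : SqMat R) ∈ S) :
    (⟨b + a, diagSum N M⟩ : SqMat R) ∈ S := by
  rw [diagSum_comm]
  exact hS.mem_reindex _ _ _ h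

lemma PermClosed.mem_assoc₁ (hS : PermClosed S) {a b c : ℕ} (M : Matrix (Fin a) (Fin a) R)
    (N : Matrix (Fin b) (Fin b) R) (K : Matrix (Fin c) (Fin c) R)
    (h : (⟨(a + b) + c, diagSum (diagSum M N) K⟩ : SqMat R) ∈ S) :
    (⟨a + (b + c), diagSum M (diagSum N K)⟩ : SqMat R) ∈ S := by
  rw [diagSum_assoc]
  exact hS.mem_reindex _ _ _ h

lemma PermClosed.mem_assoc₂ (hS : PermClosed S) {a b c : ℕ} (M : Matrix (Fin a) (Fin a) R)
    (N : Matrix (Fin b) (Fin b) R) (K : Matrix (Fin c) (Fin c) R)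
    (h : (⟨a + (b + c), diagSum M (diagSum N K)⟩ : SqMat R) ∈ S) :
    (⟨(a + b) + c, diagSum (diagSum M N) K⟩ : SqMat R) ∈ S := by
  have := hS.mem_reindex _ eassoc.symm eassoc.symm h
  rwa [diagSum_assoc M N K, submatrix_equiv_symm] at this

lemma PermClosed.mem_congr_right (hS : PermClosed S) {a b b' : ℕ}
    (M : Matrix (Fin a) (Fin a) R) (N : Matrix (Fin b) (Fin b) R)
    (N' : Matrix (Fin b') (Fin b') R) (e f : Fin b' ≃ Fin b)
    (hN : N' = N.submatrix ⇑e ⇑f)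
    (h : (⟨a + b, diagSum M N⟩ : SqMat R) ∈ S) :
    (⟨a + b', diagSum M N'⟩ : SqMat R) ∈ S := by
  rw [hN, diagSum_submatrix_right]
  exact hS.mem_reindex _ _ _ h

lemma PermClosed.mem_congr_left (hS : PermClosed S) {a a' b : ℕ}
    (M : Matrix (Fin a) (Fin a) R) (M' : Matrix (Fin a') (Fin a') R)
    (N : Matrix (Fin b) (Fin b) R) (e f : Fin a' ≃ Fin a)
    (hM : M' = M.submatrix ⇑e ⇑f)
    (h : (⟨a + b, diagSum M N⟩ : SqMat R) ∈ S) :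
    (⟨a' + b, diagSum M' N⟩ : SqMat R) ∈ S := by
  rw [hM, diagSum_submatrix_left]
  exact hS.mem_reindex _ _ _ h

lemma mem_one_cast {n : ℕ} {A : Matrix (Fin n) (Fin n) R} {a b : ℕ} (h : a = b)
    (hA : (⟨n + a, diagSum A (1 : Matrix (Fin a) (Fin a) R)⟩ : SqMat R) ∈ S) :
    (⟨n + b, diagSum A (1 : Matrix (Fin b) (Fin b) R)⟩ : SqMat R) ∈ S := by
  subst h; exact hA

end PermClosed

variable (𝒜 : Γ → AddSubgroup R)

/-- The inductively generated gr-matrix pre-ideal on a generating set `G`. -/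
inductive PreGen (G : Set (SqMat R)) : SqMat R → Prop
  | mem (p : SqMat R) : p ∈ G → PreGen G p
  | nonfull {n : ℕ} (A : Matrix (Fin n) (Fin n) R) :
      IsHomogSq 𝒜 A → ¬ IsGrFull 𝒜 A → PreGen G ⟨n, A⟩
  | detsum {n : ℕ} (A B C : Matrix (Fin n) (Fin n) R) :
      PreGen G ⟨n, A⟩ → PreGen G ⟨n, B⟩ → GrDetSum 𝒜 A B C → PreGen G ⟨n, C⟩
  | diag {m k : ℕ} (A : Matrix (Fin m) (Fin m) R) (X : Matrix (Fin k) (Fin k) R) :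
      PreGen G ⟨m, A⟩ → IsHomogSq 𝒜 X → PreGen G ⟨m + k, diagSum A X⟩
  | perm {n : ℕ} (A : Matrix (Fin n) (Fin n) R) (e f : Equiv.Perm (Fin n)) :
      PreGen G ⟨n, A⟩ → PreGen G ⟨n, A.submatrix ⇑e ⇑f⟩

variable {𝒜}

lemma preGen_permClosed {G : Set (SqMat R)} : PermClosed {p : SqMat R | PreGen 𝒜 G p} :=
  fun A e f h => PreGen.perm A e f h

lemma preGen_homog {G : Set (SqMat R)} (hG : ∀ p ∈ G, IsHomogSq 𝒜 p.2)
    {p : SqMat R} (hp : PreGen 𝒜 G p) : IsHomogSq 𝒜 p.2 := by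
  induction hp with
  | mem p hp => exact hG p hp
  | nonfull A hA _ => exact hA
  | detsum A B C _ _ h _ _ => exact isHomogSq_detSum h
  | diag A X _ hX ihA => exact isHomogSq_diagSum ihA hX
  | perm A e f _ ihA => exact isHomogSq_submatrix ihA _ _

lemma preGen_subset_ideal {G J : Set (SqMat R)} (hJ : IsGrMatrixIdeal 𝒜 J) (hGJ : G ⊆ J)
    {p : SqMat R} (hp : PreGen 𝒜 G p) : p ∈ J := by
  induction hp with
  | mem p hp => exact hGJ hp
  | nonfull A hA hA2 => exact hJ.i1 A hA hA2
  | detsum A B C _ _ h ihA ihB => exact hJ.i2 A B C ihA ihB h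
  | diag A X _ hX ihA => exact hJ.i3 A X ihA hX
  | perm A e f _ ihA => exact hJ.i4 A e f ihA

lemma ideal_permClosed {J : Set (SqMat R)} (hJ : IsGrMatrixIdeal 𝒜 J) : PermClosed J :=
  fun A e f h => hJ.i4 A e f h

/-- Removing an identity-block pad inside a gr-matrix ideal. -/
lemma ideal_unpad {J : Set (SqMat R)} (hJ : IsGrMatrixIdeal 𝒜 J) {n : ℕ}
    (A : Matrix (Fin n) (Fin n) R) :
    ∀ t, (⟨n + t, diagSum A (1 : Matrix (Fin t) (Fin t) R)⟩ : SqMat R) ∈ J →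
      (⟨n, A⟩ : SqMat R) ∈ J := by
  intro t
  induction t with
  | zero => intro h; rwa [diagSum_nil] at h
  | succ t ih =>
      intro h
      rw [show (1 : Matrix (Fin (t + 1)) (Fin (t + 1)) R)
            = diagSum (1 : Matrix (Fin t) (Fin t) R) (1 : Matrix (Fin 1) (Fin 1) R)
          from (diagSum_one).symm] at h
      have hpc : PermClosed J := ideal_permClosed hJ
      have h2 := hpc.mem_assoc₂ A _ _ h
      exact ih (hJ.i5 _ h2)

variable (𝒜)

/-- The gr-matrix ideal generated by `G`. -/
def grIdealGen (G : Set (SqMat R)) : Set (SqMat R) :=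
  {p : SqMat R | ∃ t : ℕ,
    PreGen 𝒜 G ⟨p.1 + t, diagSum p.2 (1 : Matrix (Fin t) (Fin t) R)⟩}

variable {𝒜}

lemma subset_grIdealGen {G : Set (SqMat R)} : G ⊆ grIdealGen 𝒜 G := by
  intro p hp
  refine ⟨0, ?_⟩
  have : diagSum p.2 (1 : Matrix (Fin 0) (Fin 0) R) = p.2 := diagSum_nil _ _
  rw [this]
  exact PreGen.mem p hp

lemma grIdealGen_subset {G J : Set (SqMat R)} (hJ : IsGrMatrixIdeal 𝒜 J) (hGJ : G ⊆ J) :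
    grIdealGen 𝒜 G ⊆ J := by
  rintro ⟨n, A⟩ ⟨t, ht⟩
  exact ideal_unpad hJ A t (preGen_subset_ideal hJ hGJ ht)

lemma preGen_pad (hone : (1 : R) ∈ 𝒜 1) {G : Set (SqMat R)} {n t : ℕ}
    {A : Matrix (Fin n) (Fin n) R}
    (h : PreGen 𝒜 G ⟨n + t, diagSum A (1 : Matrix (Fin t) (Fin t) R)⟩) (s : ℕ) :
    PreGen 𝒜 G ⟨n + (t + s), diagSum A (1 : Matrix (Fin (t + s)) (Fin (t + s)) R)⟩ := by
  have h1 := PreGen.diag _ (1 : Matrix (Fin s) (Fin s) R) h ⟨_, _, isHomog_one hone s⟩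
  have h2 := preGen_permClosed.mem_assoc₁ A _ _ h1
  rwa [diagSum_one] at h2

lemma grIdealGen_isIdeal (hone : (1 : R) ∈ 𝒜 1) {G : Set (SqMat R)}
    (hG : ∀ p ∈ G, IsHomogSq 𝒜 p.2) : IsGrMatrixIdeal 𝒜 (grIdealGen 𝒜 G) := by
  constructor
  · -- subset_homog
    rintro ⟨n, A⟩ ⟨t, ht⟩
    dsimp only at ht ⊢
    obtain ⟨δ, ε, hh⟩ := preGen_homog hG ht
    refine ⟨δ ∘ Fin.castAdd t, ε ∘ Fin.castAdd t, fun i j => ?_⟩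
    have := hh (Fin.castAdd t i) (Fin.castAdd t j)
    simpa using this
  · -- i1
    intro n A hA hA2
    refine ⟨0, ?_⟩
    rw [show diagSum A (1 : Matrix (Fin 0) (Fin 0) R) = A from diagSum_nil _ _]
    exact PreGen.nonfull A hA hA2
  · -- i2
    intro n A B C ⟨t, hA⟩ ⟨s, hB⟩ hd
    have hA' := preGen_pad hone hA s
    have hB' := preGen_pad hone hB t
    have hB'' := mem_one_cast (S := {p : SqMat R | PreGen 𝒜 G p}) (Nat.add_comm s t) hB'
    refine ⟨t + s, ?_⟩
    exact PreGen.detsum _ _ _ hA' hB''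
      (grDetSum_diagSum_right hone ⟨_, _, isHomog_one hone (t + s)⟩ hd)
  · -- i3
    intro n k A X ⟨t, hA⟩ hX
    refine ⟨t, ?_⟩
    have h1 := PreGen.diag _ X hA hX
    have h2 := preGen_permClosed.mem_assoc₁ A _ _ h1
    have h3 := preGen_permClosed.mem_congr_right A _ _ ecomm ecomm (diagSum_comm _ _) h2
    exact preGen_permClosed.mem_assoc₂ A X _ h3
  · -- i4
    intro n A e f ⟨t, hA⟩
    refine ⟨t, ?_⟩
    rw [diagSum_submatrix_left]
    exact preGen_permClosed.mem_reindex _ _ _ hA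
  · -- i5
    intro n A ⟨t, hA⟩
    refine ⟨1 + t, ?_⟩
    have h1 := preGen_permClosed.mem_assoc₁ A (1 : Matrix (Fin 1) (Fin 1) R)
      (1 : Matrix (Fin t) (Fin t) R) hA
    rwa [diagSum_one] at h1

end Dev3
section Dev4

open Matrix

variable {Γ : Type u} [Group Γ] {R : Type v} [Ring R] {𝒜 : Γ → AddSubgroup R}

lemma key_inner (hone : (1 : R) ∈ 𝒜 1) {P : Set (SqMat R)}
    (hP : ∀ p ∈ P, IsHomogSq 𝒜 p.2) {n m : ℕ} {A : Matrix (Fin n) (Fin n) R}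
    {B : Matrix (Fin m) (Fin m) R} (hA : IsHomogSq 𝒜 A) (hB : IsHomogSq 𝒜 B)
    {q : SqMat R} (hq : PreGen 𝒜 (P ∪ {(⟨m, B⟩ : SqMat R)}) q) :
    (⟨n + q.1, diagSum A q.2⟩ : SqMat R)
      ∈ grIdealGen 𝒜 (P ∪ {(⟨n + m, diagSum A B⟩ : SqMat R)}) := by
  set G : Set (SqMat R) := P ∪ {(⟨n + m, diagSum A B⟩ : SqMat R)} with hGdef
  have hGhom : ∀ p ∈ G, IsHomogSq 𝒜 p.2 := by
    rintro p (hp | hp)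
    · exact hP p hp
    · rw [Set.mem_singleton_iff] at hp
      subst hp
      exact isHomogSq_diagSum hA hB
  have hJ : IsGrMatrixIdeal 𝒜 (grIdealGen 𝒜 G) := grIdealGen_isIdeal hone hGhom
  have hpc : PermClosed (grIdealGen 𝒜 G) := ideal_permClosed hJ
  have hGBhom : ∀ p ∈ P ∪ {(⟨m, B⟩ : SqMat R)}, IsHomogSq 𝒜 p.2 := by
    rintro p (hp | hp)
    · exact hP p hp
    · rw [Set.mem_singleton_iff] at hp
      subst hp
      exact hB
  induction hq with
  | mem q hq =>
      rcases hq with hq | hq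
      · -- q ∈ P
        have hqJ : q ∈ grIdealGen 𝒜 G := subset_grIdealGen (Or.inl hq)
        have h1 := hJ.i3 q.2 A (by exact hqJ) hA
        exact hpc.mem_swap _ _ h1
      · rw [Set.mem_singleton_iff] at hq
        subst hq
        exact subset_grIdealGen (Or.inr rfl)
  | nonfull C hhom hnf =>
      have h1 : ¬ IsGrFull 𝒜 (diagSum C A) := not_grFull_diagSum hone hnf hA
      have h2 := hJ.i1 _ (isHomogSq_diagSum hhom hA) h1
      exact hpc.mem_swap _ _ h2
  | detsum C1 C2 C3 h1 h2 hd ih1 ih2 =>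
      exact hJ.i2 _ _ _ ih1 ih2 (grDetSum_diagSum_left hone hA hd)
  | diag C X hC hX ih =>
      have h1 := hJ.i3 _ X ih hX
      exact hpc.mem_assoc₁ A _ _ h1
  | perm C e f hC ih =>
      exact hpc.mem_congr_right A C _ e f rfl ih

lemma key_outer (hone : (1 : R) ∈ 𝒜 1) {P : Set (SqMat R)}
    (hP : ∀ p ∈ P, IsHomogSq 𝒜 p.2) {n m : ℕ} {A : Matrix (Fin n) (Fin n) R}
    {B : Matrix (Fin m) (Fin m) R} (hA : IsHomogSq 𝒜 A) (hB : IsHomogSq 𝒜 B)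
    {p : SqMat R} (hp : PreGen 𝒜 (P ∪ {(⟨n, A⟩ : SqMat R)}) p)
    {q : SqMat R} (hq : PreGen 𝒜 (P ∪ {(⟨m, B⟩ : SqMat R)}) q) :
    (⟨p.1 + q.1, diagSum p.2 q.2⟩ : SqMat R)
      ∈ grIdealGen 𝒜 (P ∪ {(⟨n + m, diagSum A B⟩ : SqMat R)}) := by
  set G : Set (SqMat R) := P ∪ {(⟨n + m, diagSum A B⟩ : SqMat R)} with hGdef
  have hGhom : ∀ r ∈ G, IsHomogSq 𝒜 r.2 := by
    rintro r (hr | hr)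
    · exact hP r hr
    · rw [Set.mem_singleton_iff] at hr
      subst hr
      exact isHomogSq_diagSum hA hB
  have hJ : IsGrMatrixIdeal 𝒜 (grIdealGen 𝒜 G) := grIdealGen_isIdeal hone hGhom
  have hpc : PermClosed (grIdealGen 𝒜 G) := ideal_permClosed hJ
  have hGBhom : ∀ r ∈ P ∪ {(⟨m, B⟩ : SqMat R)}, IsHomogSq 𝒜 r.2 := by
    rintro r (hr | hr)
    · exact hP r hr
    · rw [Set.mem_singleton_iff] at hr
      subst hr
      exact hB
  have hqhom : IsHomogSq 𝒜 q.2 := preGen_homog hGBhom hq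
  induction hp with
  | mem p hp =>
      rcases hp with hp | hp
      · have hpJ : p ∈ grIdealGen 𝒜 G := subset_grIdealGen (Or.inl hp)
        exact hJ.i3 p.2 q.2 (by exact hpJ) hqhom
      · rw [Set.mem_singleton_iff] at hp
        subst hp
        exact key_inner hone hP hA hB hq
  | nonfull C hhom hnf =>
      exact hJ.i1 _ (isHomogSq_diagSum hhom hqhom) (not_grFull_diagSum hone hnf hqhom)
  | detsum C1 C2 C3 h1 h2 hd ih1 ih2 =>
      exact hJ.i2 _ _ _ ih1 ih2 (grDetSum_diagSum_right hone hqhom hd)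
  | diag C X hC hX ih =>
      have h1 := hJ.i3 _ X ih hX
      have h2 := hpc.mem_assoc₁ C _ _ h1
      have h3 := hpc.mem_congr_right C _ _ ecomm ecomm (diagSum_comm _ _) h2
      exact hpc.mem_assoc₂ C X _ h3
  | perm C e f hC ih =>
      exact hpc.mem_congr_left C _ _ e f rfl ih

/-- **Key lemma**: diagonal sums of elements of the ideals generated by `P, A` and by
`P, B` lie in the ideal generated by `P, A ⊕ B`. -/
lemma key_diagSum (hone : (1 : R) ∈ 𝒜 1) {P : Set (SqMat R)}
    (hP : ∀ p ∈ P, IsHomogSq 𝒜 p.2) {n m : ℕ} {A : Matrix (Fin n) (Fin n) R}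
    {B : Matrix (Fin m) (Fin m) R} (hA : IsHomogSq 𝒜 A) (hB : IsHomogSq 𝒜 B)
    {a b : ℕ} {S : Matrix (Fin a) (Fin a) R} {T : Matrix (Fin b) (Fin b) R}
    (hS : (⟨a, S⟩ : SqMat R) ∈ grIdealGen 𝒜 (P ∪ {(⟨n, A⟩ : SqMat R)}))
    (hT : (⟨b, T⟩ : SqMat R) ∈ grIdealGen 𝒜 (P ∪ {(⟨m, B⟩ : SqMat R)})) :
    (⟨a + b, diagSum S T⟩ : SqMat R)
      ∈ grIdealGen 𝒜 (P ∪ {(⟨n + m, diagSum A B⟩ : SqMat R)}) := by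
  set G : Set (SqMat R) := P ∪ {(⟨n + m, diagSum A B⟩ : SqMat R)} with hGdef
  have hGhom : ∀ r ∈ G, IsHomogSq 𝒜 r.2 := by
    rintro r (hr | hr)
    · exact hP r hr
    · rw [Set.mem_singleton_iff] at hr
      subst hr
      exact isHomogSq_diagSum hA hB
  have hJ : IsGrMatrixIdeal 𝒜 (grIdealGen 𝒜 G) := grIdealGen_isIdeal hone hGhom
  have hpc : PermClosed (grIdealGen 𝒜 G) := ideal_permClosed hJ
  obtain ⟨t, ht⟩ := hS
  obtain ⟨s, hs⟩ := hT
  have h0 := key_outer hone hP hA hB ht hs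
  dsimp only at h0
  -- h0 : ⟨(a+t)+(b+s), (S ⊕ 1_t) ⊕ (T ⊕ 1_s)⟩ ∈ J
  have h1 := hpc.mem_assoc₁ S (1 : Matrix (Fin t) (Fin t) R) _ h0
  have hassoc2 : diagSum (diagSum (1 : Matrix (Fin t) (Fin t) R) T)
      (1 : Matrix (Fin s) (Fin s) R)
      = (diagSum (1 : Matrix (Fin t) (Fin t) R)
          (diagSum T (1 : Matrix (Fin s) (Fin s) R))).submatrix ⇑eassoc.symm ⇑eassoc.symm := by
    rw [diagSum_assoc (1 : Matrix (Fin t) (Fin t) R) T (1 : Matrix (Fin s) (Fin s) R),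
      submatrix_equiv_symm]
  have h2 := hpc.mem_congr_right S _ _ eassoc.symm eassoc.symm hassoc2 h1
  have hswap : diagSum (diagSum T (1 : Matrix (Fin t) (Fin t) R))
      (1 : Matrix (Fin s) (Fin s) R)
      = (diagSum (diagSum (1 : Matrix (Fin t) (Fin t) R) T)
          (1 : Matrix (Fin s) (Fin s) R)).submatrix
        (esum ecomm (Equiv.refl (Fin s))) (esum ecomm (Equiv.refl (Fin s))) := by
    rw [← diagSum_submatrix_left, ← diagSum_comm]
  have h3 := hpc.mem_congr_right S _ _ _ _ hswap h2
  have h4 := hpc.mem_congr_right S _ _ eassoc eassoc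
    (diagSum_assoc T (1 : Matrix (Fin t) (Fin t) R) (1 : Matrix (Fin s) (Fin s) R)) h3
  have h5 := hpc.mem_assoc₂ S T _ h4
  rw [diagSum_one] at h5
  exact ideal_unpad hJ (diagSum S T) (t + s) h5
end Dev4
section DevMain

open Matrix

variable {Γ : Type u} [Group Γ] {R : Type v} [Ring R] {𝒜 : Γ → AddSubgroup R}

lemma maximal_mem_prime (hone : (1 : R) ∈ 𝒜 1)
    (Sig : Set (SqMat R)) (hne : Sig.Nonempty)
    (hhomog : ∀ p ∈ Sig, IsHomogSq 𝒜 p.2)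
    (hdiag : ∀ p ∈ Sig, ∀ q ∈ Sig, (⟨p.1 + q.1, diagSum p.2 q.2⟩ : SqMat R) ∈ Sig)
    (I : Set (SqMat R))
    (B : Set (SqMat R))
    (hB : IsGrMatrixIdeal 𝒜 B ∧ I ⊆ B ∧ B ∩ Sig = ∅)
    (hmax : ∀ C : Set (SqMat R),
      (IsGrMatrixIdeal 𝒜 C ∧ I ⊆ C ∧ C ∩ Sig = ∅) → B ⊆ C → C = B) :
    IsGrPrimeMatrixIdeal 𝒜 B := by
  obtain ⟨hBi, hIB, hBd⟩ := hB
  have hBd' : ∀ p ∈ B, p ∉ Sig := by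
    intro p hp hps
    rw [Set.eq_empty_iff_forall_notMem] at hBd
    exact hBd p ⟨hp, hps⟩
  refine ⟨hBi.subset_homog, hBi.i1, hBi.i2, hBi.i3, ?_, ?_, hBi.i4⟩
  · -- pm4
    intro m n A A' hA hA' hAB
    by_contra hcon
    push_neg at hcon
    obtain ⟨hAnot, hA'not⟩ := hcon
    have hmeets : ∀ (k : ℕ) (X : Matrix (Fin k) (Fin k) R), IsHomogSq 𝒜 X →
        (⟨k, X⟩ : SqMat R) ∉ B →
        ∃ p, p ∈ grIdealGen 𝒜 (B ∪ {(⟨k, X⟩ : SqMat R)}) ∧ p ∈ Sig := by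
      intro k X hX hXnot
      have hGhom : ∀ r ∈ B ∪ {(⟨k, X⟩ : SqMat R)}, IsHomogSq 𝒜 r.2 := by
        rintro r (hr | hr)
        · exact hBi.subset_homog r hr
        · rw [Set.mem_singleton_iff] at hr; subst hr; exact hX
      have hJ : IsGrMatrixIdeal 𝒜 (grIdealGen 𝒜 (B ∪ {(⟨k, X⟩ : SqMat R)})) :=
        grIdealGen_isIdeal hone hGhom
      by_contra hno
      push_neg at hno
      have hdisj2 : grIdealGen 𝒜 (B ∪ {(⟨k, X⟩ : SqMat R)}) ∩ Sig = ∅ := by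
        rw [Set.eq_empty_iff_forall_notMem]
        rintro p ⟨h1, h2⟩
        exact hno p h1 h2
      have hBsub : B ⊆ grIdealGen 𝒜 (B ∪ {(⟨k, X⟩ : SqMat R)}) :=
        fun p hp => subset_grIdealGen (Or.inl hp)
      have heq := hmax _ ⟨hJ, hIB.trans hBsub, hdisj2⟩ hBsub
      apply hXnot
      rw [← heq]
      exact subset_grIdealGen (Or.inr rfl)
    obtain ⟨p, hpJ, hpS⟩ := hmeets m A hA hAnot
    obtain ⟨q, hqJ, hqS⟩ := hmeets n A' hA' hA'not
    have hkey := key_diagSum hone hBi.subset_homog hA hA'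
      (a := p.1) (b := q.1) (S := p.2) (T := q.2) hpJ hqJ
    have hsub : grIdealGen 𝒜 (B ∪ {(⟨m + n, diagSum A A'⟩ : SqMat R)}) ⊆ B := by
      refine grIdealGen_subset hBi ?_
      rintro r (hr | hr)
      · exact hr
      · rw [Set.mem_singleton_iff] at hr; subst hr; exact hAB
    exact hBd' _ (hsub hkey) (hdiag p hpS q hqS)
  · -- pm5
    intro h1
    obtain ⟨s, hs⟩ := hne
    have h2 := hBi.i3 (1 : Matrix (Fin 1) (Fin 1) R) s.2 h1 (hhomog s hs)
    have hpc : PermClosed B := ideal_permClosed hBi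
    have h3 := hpc.mem_swap _ _ h2
    have h4 := hBi.i5 s.2 h3
    exact hBd' s h4 hs

end DevMain


/-- Let `R` be a `Γ`-graded ring, `Sig ⊆ 𝔐(R)` nonempty and closed
under diagonal sums, and `I` a gr-matrix ideal with `I ∩ Sig = ∅`.  Then the
collection `W` of gr-matrix ideals `B` with `I ⊆ B` and `B ∩ Sig = ∅`, partially
ordered by inclusion, has maximal elements, and every maximal element of `W` is a
gr-prime matrix ideal. -/
theorem gr_matrix_ideal_maximal_avoiding_exists_and_isPrime
    {Γ : Type u} [Group Γ] [DecidableEq Γ] {R : Type v} [Ring R]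
    (𝒜 : Γ → AddSubgroup R)
    (hinternal : DirectSum.IsInternal 𝒜)
    (hone : (1 : R) ∈ 𝒜 1)
    (hmul : ∀ {γ δ : Γ} {x y : R}, x ∈ 𝒜 γ → y ∈ 𝒜 δ → x * y ∈ 𝒜 (γ * δ))
    (Sig : Set (SqMat R)) (hne : Sig.Nonempty)
    (hhomog : ∀ p ∈ Sig, IsHomogSq 𝒜 p.2)
    (hdiag : ∀ p ∈ Sig, ∀ q ∈ Sig, (⟨p.1 + q.1, diagSum p.2 q.2⟩ : SqMat R) ∈ Sig)
    (I : Set (SqMat R)) (hI : IsGrMatrixIdeal 𝒜 I) (hdisj : I ∩ Sig = ∅) :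
    (∃ B : Set (SqMat R),
        (IsGrMatrixIdeal 𝒜 B ∧ I ⊆ B ∧ B ∩ Sig = ∅) ∧
        ∀ C : Set (SqMat R),
          (IsGrMatrixIdeal 𝒜 C ∧ I ⊆ C ∧ C ∩ Sig = ∅) → B ⊆ C → C = B) ∧
    (∀ B : Set (SqMat R),
        (IsGrMatrixIdeal 𝒜 B ∧ I ⊆ B ∧ B ∩ Sig = ∅) →
        (∀ C : Set (SqMat R),
          (IsGrMatrixIdeal 𝒜 C ∧ I ⊆ C ∧ C ∩ Sig = ∅) → B ⊆ C → C = B) →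
        IsGrPrimeMatrixIdeal 𝒜 B) := by
  constructor
  · -- existence of maximal elements, by Zorn's lemma
    set W : Set (Set (SqMat R)) :=
      {B | IsGrMatrixIdeal 𝒜 B ∧ I ⊆ B ∧ B ∩ Sig = ∅} with hW
    have hWI : I ∈ W := ⟨hI, subset_rfl, hdisj⟩
    have hchain : ∀ c ⊆ W, IsChain (· ⊆ ·) c → c.Nonempty →
        ∃ ub ∈ W, ∀ s ∈ c, s ⊆ ub := by
      intro c hcW hc hcne
      refine ⟨⋃₀ c, ⟨?_, ?_, ?_⟩, fun s hs => Set.subset_sUnion_of_mem hs⟩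
      · constructor
        · rintro p ⟨D, hDc, hpD⟩
          exact (hcW hDc).1.subset_homog p hpD
        · intro n A h1 h2
          obtain ⟨D, hDc⟩ := hcne
          exact ⟨D, hDc, (hcW hDc).1.i1 A h1 h2⟩
        · rintro n A A' C ⟨D1, hD1, hA⟩ ⟨D2, hD2, hA'⟩ hd
          rcases hc.total hD1 hD2 with h | h
          · exact ⟨D2, hD2, (hcW hD2).1.i2 A A' C (h hA) hA' hd⟩
          · exact ⟨D1, hD1, (hcW hD1).1.i2 A A' C hA (h hA') hd⟩
        · rintro m n A A' ⟨D1, hD1, hA⟩ hA'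
          exact ⟨D1, hD1, (hcW hD1).1.i3 A A' hA hA'⟩
        · rintro n A e f ⟨D1, hD1, hA⟩
          exact ⟨D1, hD1, (hcW hD1).1.i4 A e f hA⟩
        · rintro n A ⟨D1, hD1, hA⟩
          exact ⟨D1, hD1, (hcW hD1).1.i5 A hA⟩
      · obtain ⟨D, hDc⟩ := hcne
        exact (hcW hDc).2.1.trans (Set.subset_sUnion_of_mem hDc)
      · rw [Set.eq_empty_iff_forall_notMem]
        rintro p ⟨⟨D, hDc, hpD⟩, hpS⟩
        have h := (hcW hDc).2.2
        rw [Set.eq_empty_iff_forall_notMem] at h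
        exact h p ⟨hpD, hpS⟩
    obtain ⟨M, _, hM⟩ := zorn_subset_nonempty W hchain I hWI
    exact ⟨M, hM.prop, fun C hC hMC => le_antisymm (hM.2 hC hMC) hMC⟩
  · intro B hB hmax
    exact maximal_mem_prime hone Sig hne hhomog hdiag I B hB hmax
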